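/- arXiv:0806.0279 — 5 statements merged into one kernel-verified Lean document; each statement's English description precedes it below -/
import Mathlib

section
/- For integers n ≥ 1 and 0 ≤ k ≤ n−1, there is a bijection between the set of ordered preference sets of length n with at least k flaws and the set S_{n,k} = {(x_1,…,x_{n−k}) ∈ ℕ^{n−k} : x_1 + x_2 + ⋯ + x_{n−k} = n + k} of solutions in nonnegative integers; in particular these two finite sets have the same cardinality. -/
/-- The first unoccupied parking space `j` with `p ≤ j ≤ n`, if any. -/
def firstFree (n : ℕ) (occ : Finset ℕ) (p : ℕ) : Option ℕ :=
  (List.range' p (n + 1 - p)).find? (fun j => decide (j ∉ occ))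

/-- Number of cars that fail to park, processing the preference list in order,
given the set of already occupied spaces. -/
def flawsFrom (n : ℕ) : List ℕ → Finset ℕ → ℕ
  | [], _ => 0
  | p :: rest, occ =>
    match firstFree n occ p with
    | none => flawsFrom n rest occ + 1
    | some j => flawsFrom n rest (insert j occ)

/-- The number of flaws (unparked cars) of a preference list of length `n`. -/
def flaws (n : ℕ) (a : List ℕ) : ℕ := flawsFrom n a ∅

/-- A preference set of length `n`: a list of length `n` with entries in `{1, …, n}`. -/
def IsPrefSet (n : ℕ) (a : List ℕ) : Prop :=
  a.length = n ∧ ∀ x ∈ a, 1 ≤ x ∧ x ≤ n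

/-- An ordered preference set of length `n`: a nondecreasing preference set. -/
def IsOrderedPrefSet (n : ℕ) (a : List ℕ) : Prop :=
  IsPrefSet n a ∧ a.Pairwise (· ≤ ·)

/-- `op_{n,≥k}`: number of ordered preference sets of length `n` with at least `k` flaws. -/
noncomputable def opGe (n k : ℕ) : ℕ :=
  {a : List ℕ | IsOrderedPrefSet n a ∧ k ≤ flaws n a}.ncard

/-- `op_{n,≤k}`: number of ordered preference sets of length `n` with at most `k` flaws. -/
noncomputable def opLe (n k : ℕ) : ℕ :=
  {a : List ℕ | IsOrderedPrefSet n a ∧ flaws n a ≤ k}.ncard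

/-- `op_{n,k}`: number of ordered preference sets of length `n` with exactly `k` flaws. -/
noncomputable def opEq (n k : ℕ) : ℕ :=
  {a : List ℕ | IsOrderedPrefSet n a ∧ flaws n a = k}.ncard

/-- `op_{n,≥k,≤l}`: at least `k` flaws, every entry at most `l`. -/
noncomputable def opGeLe (n k l : ℕ) : ℕ :=
  {a : List ℕ | IsOrderedPrefSet n a ∧ k ≤ flaws n a ∧ ∀ x ∈ a, x ≤ l}.ncard

/-- `op_{n,≥k,≤l}^m`: at least `k` flaws, every entry at most `l`, leading term `m`. -/
noncomputable def opGeLeLead (n k l m : ℕ) : ℕ :=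
  {a : List ℕ | IsOrderedPrefSet n a ∧ k ≤ flaws n a ∧ (∀ x ∈ a, x ≤ l) ∧
    a.head? = some m}.ncard

/-- `op_{n,k,≤l}^m`: exactly `k` flaws, every entry at most `l`, leading term `m`. -/
noncomputable def opEqLeLead (n k l m : ℕ) : ℕ :=
  {a : List ℕ | IsOrderedPrefSet n a ∧ flaws n a = k ∧ (∀ x ∈ a, x ≤ l) ∧
    a.head? = some m}.ncard

/-- `op_{n,k}^m`: exactly `k` flaws, leading term `m`. -/
noncomputable def opLead (n k m : ℕ) : ℕ :=
  {a : List ℕ | IsOrderedPrefSet n a ∧ flaws n a = k ∧ a.head? = some m}.ncard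

/-- `op_{n,k,=l}^m`: exactly `k` flaws, maximal entry exactly `l`, leading term `m`. -/
noncomputable def opMaxLead (n k l m : ℕ) : ℕ :=
  {a : List ℕ | IsOrderedPrefSet n a ∧ flaws n a = k ∧ (∀ x ∈ a, x ≤ l) ∧ l ∈ a ∧
    a.head? = some m}.ncard

/-- Binomial coefficient `C(a, b)` with an integer lower index, which is `0`
when `b < 0` (the standard convention). -/
def chooseInt (a : ℕ) (b : ℤ) : ℕ := if 0 ≤ b then a.choose b.toNat else 0

/-!
A nondecreasing preference list parks its cars greedily from the left, and at least `k` cars fail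
exactly when some entry `a i` (indexed from `0`, with `i < n - k`) exceeds `i + k`. Writing the
list as a word of `n` stars and `n - 1` bars, this says that the path going up at bars and down at
stars reaches height `k`. Reflecting such a path up to its first visit at height `k` gives a
bijection with the `(n + k)`-subsets of the `2n - 1` positions, so there are `C(2n - 1, n + k)`
such lists. By stars and bars this is also the number of `(n - k)`-tuples of naturals with sum
`n + k`, and two finite sets of equal cardinality are in bijection.
-/

open Finset

/-- The flaws of a nondecreasing list `l` when, among the spaces `≥ l.head`, exactly those below
`r` are taken: each car then parks at `max p r`, or fails if that exceeds `n`. -/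
def sortedFlaws (n : ℕ) : List ℕ → ℕ → ℕ
  | [], _ => 0
  | p :: rest, r =>
    if max p r ≤ n then sortedFlaws n rest (max p r + 1) else sortedFlaws n rest r + 1

lemma firstFree_eq_of_occupied {n p r : ℕ} {occ : Finset ℕ}
    (hocc : ∀ j, p ≤ j → j ≤ n → (j ∈ occ ↔ j < r)) :
    firstFree n occ p = if max p r ≤ n then some (max p r) else none := by
  unfold firstFree
  split_ifs with h
  · rw [List.find?_eq_some_iff_getElem]
    refine ⟨?_, max p r - p, by simp only [List.length_range']; omega, by simp, fun j hj => ?_⟩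
    · simp [hocc _ (le_max_left p r) h]
    · simp only [List.getElem_range', decide_not, Bool.not_not, decide_eq_true_eq]
      exact (hocc _ (by omega) (by omega)).2 (by omega)
  · rw [List.find?_eq_none]
    intro j hj
    rw [List.mem_range'_1] at hj
    simpa using (hocc j (by omega) (by omega)).2 (by omega)

lemma flawsFrom_eq_sortedFlaws {n : ℕ} {l : List ℕ} (hl : l.Pairwise (· ≤ ·))
    {occ : Finset ℕ} {r b : ℕ} (hb : ∀ p ∈ l, b ≤ p)
    (hocc : ∀ j, b ≤ j → j ≤ n → (j ∈ occ ↔ j < r)) :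
    flawsFrom n l occ = sortedFlaws n l r := by
  induction l generalizing occ r b with
  | nil => rfl
  | cons p rest ih =>
    rw [List.pairwise_cons] at hl
    have hbp : b ≤ p := hb p List.mem_cons_self
    have hfree := firstFree_eq_of_occupied (n := n) (r := r)
      fun j hj hjn => hocc j (hbp.trans hj) hjn
    rw [flawsFrom, sortedFlaws, hfree]
    split_ifs with h
    · refine ih hl.2 hl.1 fun j hj hjn => ?_
      rw [Finset.mem_insert, hocc j (hbp.trans hj) hjn]
      omega
    · rw [ih hl.2 hl.1 fun j hj hjn => hocc j (hbp.trans hj) hjn]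

lemma flaws_eq_sortedFlaws {n : ℕ} {a : List ℕ} (ha : a.Pairwise (· ≤ ·)) :
    flaws n a = sortedFlaws n a 0 :=
  flawsFrom_eq_sortedFlaws ha (b := 0) (fun _ _ => Nat.zero_le _) (by simp)

lemma sortedFlaws_le_length (n : ℕ) (l : List ℕ) (r : ℕ) : sortedFlaws n l r ≤ l.length := by
  induction l generalizing r with
  | nil => rfl
  | cons p rest ih =>
    rw [sortedFlaws]
    split_ifs
    · exact (ih _).trans (Nat.le_succ _)
    · exact Nat.succ_le_succ (ih r)

lemma sortedFlaws_of_lt {n r : ℕ} {l : List ℕ} (hl : ∀ p ∈ l, p ≤ n) (hr : n < r) :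
    sortedFlaws n l r = l.length := by
  induction l with
  | nil => rfl
  | cons p rest ih =>
    rw [sortedFlaws, if_neg (by omega), ih fun q hq => hl q (List.mem_cons_of_mem _ hq),
      List.length_cons]

/-- At least `k` cars fail iff car `j = l.length - k` (counted from `0`) fails, i.e. iff the space
it would take, the largest of `r + j` and the `l[i] + (j - i)` for `i < j`, exceeds `n`. -/
lemma le_sortedFlaws_iff {n k : ℕ} (hk : 1 ≤ k) {l : List ℕ} (hl : ∀ p ∈ l, p ≤ n) (r : ℕ) :
    k ≤ sortedFlaws n l r ↔
      k ≤ l.length ∧ (n < r + (l.length - k) ∨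
        ∃ i < l.length - k, n + i < l.getD i 0 + (l.length - k)) := by
  induction l generalizing r with
  | nil =>
    exact iff_of_false (by rw [sortedFlaws]; omega)
      fun h => absurd h.1 (by rw [List.length_nil]; omega)
  | cons p rest ih =>
    have hp : p ≤ n := hl p List.mem_cons_self
    have hrest : ∀ q ∈ rest, q ≤ n := fun q hq => hl q (List.mem_cons_of_mem _ hq)
    rw [sortedFlaws]
    split_ifs with h
    · rcases Nat.lt_or_ge rest.length k with hlen | hlen
      · have := sortedFlaws_le_length n rest (max p r + 1)
        simp only [List.length_cons]
        constructor
        · omega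
        · rintro ⟨_, h' | ⟨i, hi, _⟩⟩ <;> omega
      · rw [ih hrest, List.length_cons, Nat.sub_add_comm hlen]
        constructor
        · rintro ⟨_, h' | ⟨i, hi, hi'⟩⟩
          · rcases le_total p r with hpr | hpr
            · exact ⟨by omega, Or.inl (by omega)⟩
            · exact ⟨by omega, Or.inr ⟨0, by omega, by rw [List.getD_cons_zero]; omega⟩⟩
          · exact ⟨by omega, Or.inr ⟨i + 1, by omega, by rw [List.getD_cons_succ]; omega⟩⟩
        · rintro ⟨_, h' | ⟨i, hi, hi'⟩⟩
          · exact ⟨hlen, Or.inl (by omega)⟩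
          · rcases i with _ | i
            · rw [List.getD_cons_zero] at hi'
              exact ⟨hlen, Or.inl (by omega)⟩
            · rw [List.getD_cons_succ] at hi'
              exact ⟨hlen, Or.inr ⟨i, by omega, by omega⟩⟩
    · rw [sortedFlaws_of_lt hrest (by omega), List.length_cons]
      constructor
      · intro hk'
        exact ⟨hk', Or.inl (by omega)⟩
      · rintro ⟨hk', -⟩
        omega

lemma le_flaws_iff {n k : ℕ} (hk : k < n) {a : List ℕ} (ha : IsOrderedPrefSet n a) :
    k ≤ flaws n a ↔ ∃ i < n - k, i + k + 1 ≤ a.getD i 0 := by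
  obtain ⟨⟨hlen, hmem⟩, hsort⟩ := ha
  rcases Nat.eq_zero_or_pos k with rfl | hk1
  · have h0 : 0 < a.length := by omega
    have := hmem _ (List.getElem_mem h0)
    exact iff_of_true (Nat.zero_le _) ⟨0, by omega, by rw [List.getD_eq_getElem _ _ h0]; omega⟩
  · rw [flaws_eq_sortedFlaws hsort, le_sortedFlaws_iff hk1 (fun p hp => (hmem p hp).2), hlen]
    constructor
    · rintro ⟨_, h | ⟨i, hi, h⟩⟩
      · omega
      · exact ⟨i, hi, by omega⟩
    · rintro ⟨i, hi, h⟩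
      exact ⟨by omega, Or.inr ⟨i, hi, by omega⟩⟩

/-- Height after `t` steps of the path stepping down at the positions in `S` and up elsewhere. -/
def pathHeight (S : Finset ℕ) (t : ℕ) : ℤ := t - 2 * #{x ∈ S | x < t}

lemma pathHeight_zero (S : Finset ℕ) : pathHeight S 0 = 0 := by
  simp [pathHeight]

lemma pathHeight_succ (S : Finset ℕ) (t : ℕ) :
    pathHeight S (t + 1) = pathHeight S t + if t ∈ S then -1 else 1 := by
  have hsplit : {x ∈ S | x < t + 1} = {x ∈ S | x < t} ∪ {x ∈ S | x = t} := by
    ext x; simp only [mem_union, mem_filter, Nat.lt_succ_iff_lt_or_eq, and_or_left]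
  have hdisj : Disjoint {x ∈ S | x < t} {x ∈ S | x = t} :=
    disjoint_filter.2 fun _ _ h h' => by omega
  rw [pathHeight, pathHeight, hsplit, card_union_of_disjoint hdisj, filter_eq' S t]
  split_ifs <;> simp <;> ring

lemma pathHeight_succ_le (S : Finset ℕ) (t : ℕ) : pathHeight S (t + 1) ≤ pathHeight S t + 1 := by
  rw [pathHeight_succ]; split_ifs <;> omega

lemma pathHeight_le_succ (S : Finset ℕ) (t : ℕ) : pathHeight S t ≤ pathHeight S (t + 1) + 1 := by
  rw [pathHeight_succ]; split_ifs <;> omega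

lemma pathHeight_of_subset_range {S : Finset ℕ} {t : ℕ} (hS : S ⊆ range t) :
    pathHeight S t = t - 2 * #S := by
  rw [pathHeight, filter_true_of_mem fun x hx => mem_range.1 (hS hx)]

/-- The set whose path is that of `S` with its first `t` steps reflected. -/
def reflect (t : ℕ) (S : Finset ℕ) : Finset ℕ := (range t \ S) ∪ {x ∈ S | t ≤ x}

lemma mem_reflect {t x : ℕ} {S : Finset ℕ} :
    x ∈ reflect t S ↔ if x < t then x ∉ S else x ∈ S := by
  rw [reflect, mem_union, mem_sdiff, mem_range, mem_filter]
  split_ifs with h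
  · simp [h, not_le.2 h]
  · simp [h, not_lt.1 h]

lemma reflect_reflect (t : ℕ) (S : Finset ℕ) : reflect t (reflect t S) = S := by
  ext x
  simp only [mem_reflect]
  split_ifs <;> simp

lemma reflect_subset_range {m t : ℕ} {S : Finset ℕ} (hS : S ⊆ range m) (ht : t ≤ m) :
    reflect t S ⊆ range m := by
  intro x hx
  rw [mem_reflect] at hx
  split_ifs at hx with hxt
  · exact mem_range.2 (by omega)
  · exact hS hx

lemma pathHeight_reflect {t t' : ℕ} (S : Finset ℕ) (ht' : t' ≤ t) :
    pathHeight (reflect t S) t' = -pathHeight S t' := by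
  induction t' with
  | zero => simp [pathHeight_zero]
  | succ t' ih =>
    have hmem : t' ∈ reflect t S ↔ t' ∉ S := by rw [mem_reflect, if_pos (by omega)]
    rw [pathHeight_succ, pathHeight_succ, ih (by omega)]
    by_cases hS : t' ∈ S <;> simp only [hmem, hS, not_true, not_false_eq_true, if_true, if_false]
      <;> ring

lemma card_reflect (t : ℕ) (S : Finset ℕ) : (#(reflect t S) : ℤ) = #S + pathHeight S t := by
  have hdisj : Disjoint (range t \ S) {x ∈ S | t ≤ x} :=
    disjoint_left.2 fun x hx hx' => by
      simp only [mem_sdiff, mem_range, mem_filter] at hx hx'; omega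
  have hinter : S ∩ range t = {x ∈ S | x < t} := by ext x; simp
  have hbelow : #{x ∈ S | x < t} ≤ t := by
    simpa using card_le_card (s := {x ∈ S | x < t}) (t := range t)
      fun x hx => mem_range.2 (mem_filter.1 hx).2
  have hsplit := card_filter_add_card_filter_not (s := S) (p := (· < t))
  simp only [not_lt] at hsplit
  rw [reflect, card_union_of_disjoint hdisj, card_sdiff, hinter, pathHeight]
  push_cast [card_range]
  omega

lemma apply_find_eq_of_succ_le {f : ℕ → ℤ} {v : ℤ} (hstep : ∀ t, f (t + 1) ≤ f t + 1)
    (h0 : f 0 ≤ v) (h : ∃ t, v ≤ f t) : f (Nat.find h) = v := by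
  have hle : v ≤ f (Nat.find h) := Nat.find_spec h
  rcases Nat.eq_zero_or_pos (Nat.find h) with h' | h'
  · rw [h'] at hle ⊢; omega
  · have hprev := Nat.find_min h (Nat.sub_one_lt_of_lt h')
    have := hstep (Nat.find h - 1)
    rw [Nat.sub_add_cancel h'] at this
    omega

open Classical in
noncomputable def reflectAtFirst (p : ℤ → Prop) [DecidablePred p] (S : Finset ℕ) : Finset ℕ :=
  if h : ∃ t, p (pathHeight S t) then reflect (Nat.find h) S else S

lemma reflectAtFirst_of_exists {p : ℤ → Prop} [DecidablePred p] {S : Finset ℕ}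
    (h : ∃ t, p (pathHeight S t)) : reflectAtFirst p S = reflect (Nat.find h) S :=
  dif_pos h

/-- Reflecting a path at the first time it satisfies `p` turns it into a path that first
satisfies the mirror image `q` of `p` at that same time. -/
lemma reflectAtFirst_reflectAtFirst {p q : ℤ → Prop} [DecidablePred p] [DecidablePred q]
    (hpq : ∀ z, p z ↔ q (-z)) {S : Finset ℕ} (h : ∃ t, p (pathHeight S t)) :
    reflectAtFirst q (reflectAtFirst p S) = S := by
  have hmirror : ∀ t ≤ Nat.find h,
      (q (pathHeight (reflect (Nat.find h) S) t) ↔ p (pathHeight S t)) := fun t ht => by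
    rw [pathHeight_reflect S ht, hpq]
  have h' : ∃ t, q (pathHeight (reflect (Nat.find h) S) t) :=
    ⟨_, (hmirror _ le_rfl).2 (Nat.find_spec h)⟩
  have hfind : Nat.find h' = Nat.find h := by
    refine le_antisymm (Nat.find_min' h' ((hmirror _ le_rfl).2 (Nat.find_spec h))) ?_
    by_contra! hlt
    exact Nat.find_min h hlt ((hmirror _ hlt.le).1 (Nat.find_spec h'))
  rw [reflectAtFirst_of_exists h, reflectAtFirst_of_exists h', hfind, reflect_reflect]

/-- The reflection principle: `s`-subsets of `range m` whose path reaches height `k` correspond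
to the `(s + k)`-subsets, whose path ends at height `m - 2 (s + k) ≤ -k`. -/
theorem card_filter_exists_le_pathHeight {m s k : ℕ} (hm : m ≤ 2 * s + k) :
    #{S ∈ powersetCard s (range m) | ∃ t ≤ m, (k : ℤ) ≤ pathHeight S t} = m.choose (s + k) := by
  rw [show m.choose (s + k) = #(powersetCard (s + k) (range m)) by simp]
  refine card_nbij' (reflectAtFirst ((k : ℤ) ≤ ·)) (reflectAtFirst fun z => (k : ℤ) ≤ -z)
    ?_ ?_ ?_ ?_
  · intro S hS
    simp only [mem_coe, mem_filter, mem_powersetCard] at hS ⊢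
    obtain ⟨⟨hSm, hcard⟩, t, htm, ht⟩ := hS
    have h : ∃ t, (k : ℤ) ≤ pathHeight S t := ⟨t, ht⟩
    have hτ : pathHeight S (Nat.find h) = k :=
      apply_find_eq_of_succ_le (pathHeight_succ_le S) (by simp [pathHeight_zero]) h
    rw [reflectAtFirst_of_exists h]
    refine ⟨reflect_subset_range hSm ((Nat.find_min' h ht).trans htm), ?_⟩
    have := card_reflect (Nat.find h) S
    omega
  · intro T hT
    simp only [mem_coe, mem_filter, mem_powersetCard] at hT ⊢
    obtain ⟨hTm, hcard⟩ := hT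
    have h : ∃ t, (k : ℤ) ≤ -pathHeight T t :=
      ⟨m, by rw [pathHeight_of_subset_range hTm]; omega⟩
    have hτ : -pathHeight T (Nat.find h) = k :=
      apply_find_eq_of_succ_le (f := fun t => -pathHeight T t)
        (fun t => by have := pathHeight_le_succ T t; omega) (by simp [pathHeight_zero]) h
    have hτm : Nat.find h ≤ m := Nat.find_min' h (by rw [pathHeight_of_subset_range hTm]; omega)
    rw [reflectAtFirst_of_exists h]
    refine ⟨⟨reflect_subset_range hTm hτm, ?_⟩, Nat.find h, hτm, ?_⟩
    · have := card_reflect (Nat.find h) T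
      omega
    · rw [pathHeight_reflect T le_rfl]; omega
  · intro S hS
    simp only [mem_coe, mem_filter] at hS
    obtain ⟨-, t, -, ht⟩ := hS
    exact reflectAtFirst_reflectAtFirst (fun z => by rw [neg_neg]) ⟨t, ht⟩
  · intro T hT
    simp only [mem_coe, mem_powersetCard] at hT
    have h : ∃ t, (k : ℤ) ≤ -pathHeight T t :=
      ⟨m, by rw [pathHeight_of_subset_range hT.1]; omega⟩
    exact reflectAtFirst_reflectAtFirst (fun z => Iff.rfl) h

namespace List

lemma SortedLT.getElem_add_sub_le {d : List ℕ} (hd : d.SortedLT) {i j : ℕ} (hij : i ≤ j)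
    (hj : j < d.length) : d[i] + (j - i) ≤ d[j] := by
  induction j, hij using Nat.le_induction with
  | base => simp
  | succ j hij ih =>
    have := hd.strictMono_get (a := ⟨j, by omega⟩) (b := ⟨j + 1, hj⟩) (by simp)
    simp only [get_eq_getElem] at this
    have := ih (by omega)
    omega

lemma SortedLT.card_filter_lt_le_iff {d : List ℕ} (hd : d.SortedLT) {i : ℕ} (hi : i < d.length)
    (t : ℕ) : #{x ∈ d.toFinset | x < t} ≤ i ↔ t ≤ d[i] := by
  induction d generalizing i with
  | nil => simp at hi
  | cons y ds ih =>
    rw [sortedLT_iff_pairwise, pairwise_cons] at hd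
    have hy : ∀ x ∈ ds.toFinset, y < x := fun x hx => hd.1 x (mem_toFinset.1 hx)
    have hyds : y ∉ ds.toFinset := fun h => lt_irrefl y (hy y h)
    rw [toFinset_cons, filter_insert]
    split_ifs with hyt
    · rw [card_insert_of_notMem (fun h => hyds (mem_filter.1 h).1)]
      rcases i with _ | i
      · simp only [getElem_cons_zero]; omega
      · rw [getElem_cons_succ, ← ih (sortedLT_iff_pairwise.2 hd.2)]; omega
    · have hempty : {x ∈ ds.toFinset | x < t} = ∅ :=
        filter_eq_empty_iff.2 fun x hx => by have := hy x hx; omega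
      rw [hempty, card_empty]
      rcases i with _ | i
      · simp only [getElem_cons_zero]; omega
      · have := hd.1 _ (getElem_mem (l := ds) (n := i) (by simpa using hi))
        simp only [getElem_cons_succ]; omega

end List

/-- Star positions when `a` is written as a word of stars and bars, the stars of value `v`
standing right after the `(v - 1)`-th bar. -/
def starList (a : List ℕ) : List ℕ := a.mapIdx fun i x => x - 1 + i

def starSet (a : List ℕ) : Finset ℕ := (starList a).toFinset

def ofStarList (d : List ℕ) : List ℕ := d.mapIdx fun i y => y - i + 1

@[simp] lemma length_starList (a : List ℕ) : (starList a).length = a.length := by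
  simp [starList]

@[simp] lemma getElem_starList (a : List ℕ) (i : ℕ) (hi : i < (starList a).length) :
    (starList a)[i] = a[i]'(by simpa using hi) - 1 + i := by
  simp [starList]

lemma ofStarList_starList {a : List ℕ} (ha : ∀ x ∈ a, 1 ≤ x) : ofStarList (starList a) = a := by
  refine List.ext_getElem (by simp [ofStarList]) fun i h₁ h₂ => ?_
  have := ha _ (List.getElem_mem h₂)
  simp only [ofStarList, List.getElem_mapIdx, getElem_starList]
  omega

lemma starList_ofStarList {d : List ℕ} (hd : d.SortedLT) : starList (ofStarList d) = d := by
  refine List.ext_getElem (by simp [ofStarList]) fun i h₁ h₂ => ?_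
  have := hd.getElem_add_sub_le (Nat.zero_le i) h₂
  simp only [ofStarList, getElem_starList, List.getElem_mapIdx]
  omega

lemma sortedLT_starList {a : List ℕ} (ha : a.Pairwise (· ≤ ·)) : (starList a).SortedLT := by
  rw [List.sortedLT_iff_getElem_lt_getElem_of_lt]
  intro i j hi hj hij
  have := List.pairwise_iff_getElem.1 ha i j (by simpa using hi) (by simpa using hj) hij
  simp only [getElem_starList]
  omega

lemma pairwise_ofStarList {d : List ℕ} (hd : d.SortedLT) : (ofStarList d).Pairwise (· ≤ ·) := by
  rw [List.pairwise_iff_getElem]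
  intro i j hi hj hij
  have := hd.getElem_add_sub_le hij.le (by simpa [ofStarList] using hj)
  simp only [ofStarList, List.getElem_mapIdx]
  omega

lemma starSet_mem_powersetCard {n : ℕ} {a : List ℕ} (ha : IsOrderedPrefSet n a) :
    starSet a ∈ powersetCard n (range (2 * n - 1)) := by
  obtain ⟨⟨hlen, hmem⟩, hsort⟩ := ha
  refine mem_powersetCard.2 ⟨fun x hx => ?_, ?_⟩
  · obtain ⟨i, hi, rfl⟩ := List.mem_iff_getElem.1 (List.mem_toFinset.1 hx)
    have := hmem _ (List.getElem_mem (l := a) (n := i) (by simpa using hi))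
    rw [getElem_starList, mem_range]
    simp only [length_starList] at hi
    omega
  · rw [starSet, List.toFinset_card_of_nodup (sortedLT_starList hsort).nodup, length_starList,
      hlen]

lemma starSet_injOn (n : ℕ) : Set.InjOn starSet {a | IsOrderedPrefSet n a} := by
  intro a ha b hb hab
  have hlist : starList a = starList b :=
    (sortedLT_starList ha.2).eq_of_mem_iff (sortedLT_starList hb.2) fun x => by
      simpa only [starSet, List.mem_toFinset] using Finset.ext_iff.1 hab x
  rw [← ofStarList_starList fun x hx => (ha.1.2 x hx).1, hlist,
    ofStarList_starList fun x hx => (hb.1.2 x hx).1]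

lemma exists_starSet_eq {n : ℕ} {S : Finset ℕ} (hS : S ∈ powersetCard n (range (2 * n - 1))) :
    ∃ a, IsOrderedPrefSet n a ∧ starSet a = S := by
  obtain ⟨hSm, hcard⟩ := mem_powersetCard.1 hS
  have hd := S.sortedLT_sort
  have hlen : S.sort.length = n := by rw [length_sort, hcard]
  refine ⟨ofStarList S.sort, ⟨⟨by simp [ofStarList, hlen], fun x hx => ?_⟩,
    pairwise_ofStarList hd⟩, by rw [starSet, starList_ofStarList hd, sort_toFinset]⟩
  obtain ⟨i, hi, rfl⟩ := List.mem_iff_getElem.1 hx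
  simp only [ofStarList, List.length_mapIdx] at hi
  have hgap := hd.getElem_add_sub_le (i := i) (j := n - 1) (by omega) (by omega)
  have hlast := mem_range.1 (hSm ((mem_sort _).1 (List.getElem_mem (l := S.sort) (n := n - 1)
    (by omega))))
  simp only [ofStarList, List.getElem_mapIdx]
  omega

lemma exists_le_pathHeight_iff {n k : ℕ} (hn : 0 < n) {S : Finset ℕ}
    (hS : S ∈ powersetCard n (range (2 * n - 1))) :
    (∃ t ≤ 2 * n - 1, (k : ℤ) ≤ pathHeight S t) ↔ ∃ i < n - k, #{x ∈ S | x < 2 * i + k} ≤ i := by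
  obtain ⟨hSm, hcard⟩ := mem_powersetCard.1 hS
  constructor
  -- With `c` stars before `t`, height `≥ k` at `t` means `2c + k ≤ t`, and the other `n - c`
  -- stars lie in `[t, 2n - 1)`; so `i = c` works.
  · rintro ⟨t, htm, ht⟩
    rw [pathHeight] at ht
    have hstars : #S ≤ #{x ∈ S | x < t} + (2 * n - 1 - t) := by
      rw [← Nat.card_Ico t]
      refine (card_le_card fun x hx => ?_).trans (card_union_le _ _)
      rw [mem_union, mem_filter, mem_Ico]
      have := mem_range.1 (hSm hx)
      by_cases hxt : x < t
      · exact Or.inl ⟨hx, hxt⟩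
      · exact Or.inr ⟨not_lt.1 hxt, this⟩
    set c := #{x ∈ S | x < t}
    have hct : 2 * c + k ≤ t := by omega
    have hmono : #{x ∈ S | x < 2 * c + k} ≤ c :=
      card_le_card fun x hx => by
        rw [mem_filter] at hx ⊢
        exact ⟨hx.1, by omega⟩
    exact ⟨c, by omega, hmono⟩
  · rintro ⟨i, hi, hcnt⟩
    exact ⟨2 * i + k, by omega, by rw [pathHeight]; push_cast; omega⟩

lemma le_flaws_iff_exists_le_pathHeight {n k : ℕ} (hk : k < n) {a : List ℕ}
    (ha : IsOrderedPrefSet n a) :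
    k ≤ flaws n a ↔ ∃ t ≤ 2 * n - 1, (k : ℤ) ≤ pathHeight (starSet a) t := by
  rw [le_flaws_iff hk ha, exists_le_pathHeight_iff (by omega) (starSet_mem_powersetCard ha)]
  refine exists_congr fun i => and_congr_right fun hi => ?_
  have hia : i < a.length := by rw [ha.1.1]; omega
  have := (ha.1.2 _ (List.getElem_mem hia)).1
  rw [starSet, (sortedLT_starList ha.2).card_filter_lt_le_iff (by simpa using hia),
    getElem_starList, List.getD_eq_getElem _ _ hia]
  omega

lemma image_starSet {n k : ℕ} (hk : k < n) :
    starSet '' {a | IsOrderedPrefSet n a ∧ k ≤ flaws n a} =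
      {S ∈ powersetCard n (range (2 * n - 1)) | ∃ t ≤ 2 * n - 1, (k : ℤ) ≤ pathHeight S t} := by
  ext S
  simp only [Set.mem_image, Set.mem_ofPred_eq, coe_filter]
  constructor
  · rintro ⟨a, ⟨ha, hflaws⟩, rfl⟩
    exact ⟨starSet_mem_powersetCard ha, (le_flaws_iff_exists_le_pathHeight hk ha).1 hflaws⟩
  · rintro ⟨hS, hpath⟩
    obtain ⟨a, ha, rfl⟩ := exists_starSet_eq hS
    exact ⟨a, ⟨ha, (le_flaws_iff_exists_le_pathHeight hk ha).2 hpath⟩, rfl⟩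

lemma finite_orderedPrefSet_le_flaws {n k : ℕ} (hk : k < n) :
    {a | IsOrderedPrefSet n a ∧ k ≤ flaws n a}.Finite :=
  Set.Finite.of_finite_image (by rw [image_starSet hk]; exact finite_toSet _)
    ((starSet_injOn n).mono fun _ ha => ha.1)

theorem ncard_orderedPrefSet_le_flaws {n k : ℕ} (hk : k < n) :
    {a | IsOrderedPrefSet n a ∧ k ≤ flaws n a}.ncard = (2 * n - 1).choose (n + k) := by
  rw [← ((starSet_injOn n).mono fun _ ha => ha.1).ncard_image, image_starSet hk,
    Set.ncard_coe_finset, card_filter_exists_le_pathHeight (by omega)]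

noncomputable def sumEqEquivSym (m s : ℕ) : {x : Fin m → ℕ | ∑ i, x i = s} ≃ Sym (Fin m) s :=
  (Sym.equivNatSumOfFintype (Fin m) s).symm

lemma finite_sum_eq (m s : ℕ) : {x : Fin m → ℕ | ∑ i, x i = s}.Finite :=
  Set.finite_coe_iff.1 (Finite.of_equiv _ (sumEqEquivSym m s).symm)

lemma ncard_sum_eq (m s : ℕ) :
    {x : Fin m → ℕ | ∑ i, x i = s}.ncard = (m + s - 1).choose s := by
  rw [← Nat.card_coe_set_eq, Nat.card_congr (sumEqEquivSym m s), Nat.card_eq_fintype_card,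
    Sym.card_sym_eq_choose, Fintype.card_fin]

theorem stmt0 (n k : ℕ) (hn : 1 ≤ n) (hk : k ≤ n - 1) :
    Nonempty ({a : List ℕ | IsOrderedPrefSet n a ∧ k ≤ flaws n a} ≃
      {x : Fin (n - k) → ℕ | ∑ i, x i = n + k}) ∧
    opGe n k = {x : Fin (n - k) → ℕ | ∑ i, x i = n + k}.ncard := by
  have hkn : k < n := by omega
  have hcard : opGe n k = {x : Fin (n - k) → ℕ | ∑ i, x i = n + k}.ncard := by
    rw [opGe, ncard_orderedPrefSet_le_flaws hkn, ncard_sum_eq,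
      show n - k + (n + k) - 1 = 2 * n - 1 by omega]
  have := (finite_orderedPrefSet_le_flaws hkn).to_subtype
  have := (finite_sum_eq (n - k) (n + k)).to_subtype
  exact ⟨Finite.card_eq.1 (by rwa [Nat.card_coe_set_eq, Nat.card_coe_set_eq]), hcard⟩
end

section
/- For integers n ≥ 1 and 0 ≤ k ≤ n−1, the number op_{n,k} of ordered preference sets of length n with exactly k flaws satisfies n · op_{n,k} = (k+1) · C(2n, n−k−1), i.e., op_{n,k} = ((k+1)/n) C(2n, n−k−1). -/
/-! For a nondecreasing preference list the spaces taken above the current preference always form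
an interval, so the cars that fail are exactly those that would park beyond `n` in an unbounded lot.
Hence an ordered preference set has at most `k` flaws iff its `j`-th entry is at most `j + k`, and
counting such lists is a ballot problem: by the reflection principle there are
`C(2n-1, n) - C(2n-1, n+k+1)` of them. Differencing in `k` gives
`op_{n,k} = C(2n-1, n+k) - C(2n-1, n+k+1) = (k+1)/n · C(2n, n-k-1)`. -/

lemma find?_range'_notMem {occ : Finset ℕ} {T : ℕ} :
    ∀ c p, (∀ j, p ≤ j → j < p + c → (j ∈ occ ↔ j < T)) →
      (List.range' p c).find? (fun j => decide (j ∉ occ)) =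
        if max p T < p + c then some (max p T) else none := by
  intro c
  induction c with
  | zero =>
    intro p _
    rw [if_neg (by omega)]
    rfl
  | succ c ih =>
    intro p hocc
    rw [List.range'_succ]
    by_cases hp : p ∈ occ
    · have hpT : p < T := (hocc p le_rfl (by omega)).1 hp
      rw [List.find?_cons_of_neg (by simp [hp]),
        ih (p + 1) fun j hj hj' => hocc j (by omega) (by omega), max_eq_right (by omega : p + 1 ≤ T),
        max_eq_right hpT.le, Nat.add_right_comm, Nat.add_assoc]
    · have hpT : ¬ p < T := fun h => hp ((hocc p le_rfl (by omega)).2 h)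
      rw [List.find?_cons_of_pos (by simp [hp]), if_pos (by omega)]
      congr 1; omega

lemma firstFree_of_interval {n q T : ℕ} {occ : Finset ℕ}
    (hocc : ∀ j, q ≤ j → j ≤ n → (j ∈ occ ↔ j < T)) {p : ℕ} (hqp : q ≤ p) :
    firstFree n occ p = if max p T ≤ n then some (max p T) else none := by
  rw [firstFree, find?_range'_notMem _ _ fun j hj hj' => hocc j (by omega) (by omega)]
  congr 1; simp only [eq_iff_iff]; omega

/-- The first free space after a nondecreasing list of preferences has parked in an unbounded lot
whose spaces below `U` are taken. -/
def parkingTop : List ℕ → ℕ → ℕ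
  | [], U => U
  | p :: rest, U => parkingTop rest (max p U + 1)

lemma parkingTop_of_forall_lt : ∀ (a : List ℕ) {U : ℕ}, (∀ x ∈ a, x < U) →
    parkingTop a U = U + a.length
  | [], _, _ => rfl
  | p :: rest, U, h => by
    have hp : p < U := h p (by simp)
    rw [parkingTop, max_eq_right hp.le,
      parkingTop_of_forall_lt rest fun x hx => by have := h x (by simp [hx]); omega, List.length_cons]
    omega

/-- Sorted cars keep the occupied spaces in `[q, n]` an initial interval `[q, T)`; a car fails
exactly when that interval has reached `n`, i.e. it would park beyond `n` in an unbounded lot. -/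
lemma flawsFrom_eq_parkingTop_sub {n : ℕ} : ∀ (a : List ℕ) {q T : ℕ} {occ : Finset ℕ},
    a.Pairwise (· ≤ ·) → (∀ x ∈ a, q ≤ x ∧ x ≤ n) → T ≤ n + 1 →
    (∀ j, q ≤ j → j ≤ n → (j ∈ occ ↔ j < T)) →
    flawsFrom n a occ = parkingTop a T - (n + 1)
  | [], _, T, _, _, _, hT, _ => by simp [flawsFrom, parkingTop]; omega
  | p :: rest, q, T, occ, hsort, hmem, hT, hocc => by
    obtain ⟨hp, hsort⟩ := List.pairwise_cons.mp hsort
    obtain ⟨hqp, hpn⟩ := hmem p (by simp)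
    have hrest : ∀ x ∈ rest, p ≤ x ∧ x ≤ n := fun x hx => ⟨hp x hx, (hmem x (by simp [hx])).2⟩
    have hocc' : ∀ j, p ≤ j → j ≤ n → (j ∈ occ ↔ j < T) := fun j hj => hocc j (hqp.trans hj)
    rw [flawsFrom, firstFree_of_interval hocc hqp, parkingTop]
    by_cases hfree : max p T ≤ n
    · rw [if_pos hfree]
      refine flawsFrom_eq_parkingTop_sub rest hsort hrest (by omega) fun j hj hjn => ?_
      rw [Finset.mem_insert, hocc' j hj hjn]
      omega
    · rw [if_neg hfree]
      dsimp only
      have hTn : T = n + 1 := by omega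
      have hlt : ∀ x ∈ rest, x < n + 1 := fun x hx => by have := hrest x hx; omega
      rw [flawsFrom_eq_parkingTop_sub rest hsort hrest hT hocc', hTn, max_eq_right (by omega),
        parkingTop_of_forall_lt rest hlt, parkingTop_of_forall_lt rest fun x hx => (hlt x hx).trans
          (Nat.lt_succ_self _)]
      omega

lemma flaws_eq_parkingTop_sub {n : ℕ} {a : List ℕ} (ha : IsOrderedPrefSet n a) :
    flaws n a = parkingTop a 0 - (n + 1) :=
  flawsFrom_eq_parkingTop_sub a ha.2 ha.1.2 (Nat.zero_le _) (by simp)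

/-- `DiagBounded c a`: the `j`-th entry of `a` (counting from `1`) is at most `c + j`. -/
def DiagBounded : ℕ → List ℕ → Prop
  | _, [] => True
  | c, p :: rest => p ≤ c + 1 ∧ DiagBounded (c + 1) rest

lemma parkingTop_le_iff : ∀ (a : List ℕ) (c U : ℕ),
    parkingTop a U ≤ c + a.length + 1 ↔ U ≤ c + 1 ∧ DiagBounded c a
  | [], c, U => by simp [parkingTop, DiagBounded]
  | p :: rest, c, U => by
    rw [parkingTop, List.length_cons, show c + (rest.length + 1) + 1 = c + 1 + rest.length + 1 by
      omega, parkingTop_le_iff rest (c + 1), DiagBounded, Nat.add_le_add_iff_right, max_le_iff]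
    tauto

lemma flaws_le_iff_diagBounded {n k : ℕ} {a : List ℕ} (ha : IsOrderedPrefSet n a) :
    flaws n a ≤ k ↔ DiagBounded k a := by
  rw [flaws_eq_parkingTop_sub ha, ← ha.1.1,
    show ∀ x, x - (a.length + 1) ≤ k ↔ x ≤ k + a.length + 1 from fun x => by omega,
    parkingTop_le_iff]
  simp

section SortedCapped

variable (n : ℕ)

def sortedCapped (m lo c : ℕ) : Set (List ℕ) :=
  {a | a.length = m ∧ a.Pairwise (· ≤ ·) ∧ (∀ x ∈ a, lo ≤ x ∧ x ≤ n) ∧ DiagBounded c a}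

variable {n}

lemma setOf_flaws_le_eq_sortedCapped (k : ℕ) :
    {a : List ℕ | IsOrderedPrefSet n a ∧ flaws n a ≤ k} = sortedCapped n n 1 k := by
  ext a
  constructor
  · rintro ⟨ha, hk⟩
    exact ⟨ha.1.1, ha.2, ha.1.2, (flaws_le_iff_diagBounded ha).1 hk⟩
  · rintro ⟨hlen, hsort, hmem, hcap⟩
    have ha : IsOrderedPrefSet n a := ⟨⟨hlen, hmem⟩, hsort⟩
    exact ⟨ha, (flaws_le_iff_diagBounded ha).2 hcap⟩

lemma finite_sortedCapped (m lo c : ℕ) : (sortedCapped n m lo c).Finite := by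
  refine ((List.finite_length_eq (Fin (n + 1)) m).image (List.map Fin.val)).subset ?_
  rintro a ⟨hlen, -, hmem, -⟩
  refine ⟨a.pmap (fun x hx => (⟨x, Nat.lt_succ_of_le hx⟩ : Fin (n + 1)))
    fun x hx => (hmem x hx).2, by simpa using hlen, ?_⟩
  simp [List.map_pmap]

lemma sortedCapped_zero (lo c : ℕ) : sortedCapped n 0 lo c = {[]} := by
  ext a
  constructor
  · rintro ⟨hlen, -⟩
    exact List.length_eq_zero_iff.1 hlen
  · rintro rfl
    exact ⟨rfl, .nil, by simp, trivial⟩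

lemma cons_mem_sortedCapped {m lo c p : ℕ} {rest : List ℕ} :
    p :: rest ∈ sortedCapped n (m + 1) lo c ↔
      lo ≤ p ∧ p ≤ n ∧ p ≤ c + 1 ∧ rest ∈ sortedCapped n m p (c + 1) := by
  simp only [sortedCapped, Set.mem_ofPred_eq, List.length_cons, List.pairwise_cons,
    List.forall_mem_cons, DiagBounded, Nat.add_right_cancel_iff]
  constructor
  · rintro ⟨hlen, ⟨hp, hsort⟩, ⟨⟨hlo, hn⟩, hmem⟩, hc, hcap⟩
    exact ⟨hlo, hn, hc, hlen, hsort, fun x hx => ⟨hp x hx, (hmem x hx).2⟩, hcap⟩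
  · rintro ⟨hlo, hn, hc, hlen, hsort, hmem, hcap⟩
    exact ⟨hlen, ⟨fun x hx => (hmem x hx).1, hsort⟩,
      ⟨⟨hlo, hn⟩, fun x hx => ⟨hlo.trans (hmem x hx).1, (hmem x hx).2⟩⟩, hc, hcap⟩

lemma sortedCapped_succ_eq_empty {m lo c : ℕ} (h : c + 1 < lo ∨ n < lo) :
    sortedCapped n (m + 1) lo c = ∅ := by
  refine Set.eq_empty_of_forall_notMem fun a ha => ?_
  obtain _ | ⟨p, rest⟩ := a
  · exact absurd ha.1 (by simp)
  · obtain ⟨hlo, hn, hc, -⟩ := cons_mem_sortedCapped.1 ha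
    omega

lemma sortedCapped_succ {m lo c : ℕ} (hc : lo ≤ c + 1) (hn : lo ≤ n) :
    sortedCapped n (m + 1) lo c =
      List.cons lo '' sortedCapped n m lo (c + 1) ∪ sortedCapped n (m + 1) (lo + 1) c := by
  ext a
  obtain _ | ⟨p, rest⟩ := a
  · simp [sortedCapped]
  · rw [Set.mem_union, Set.mem_image, cons_mem_sortedCapped, cons_mem_sortedCapped]
    simp only [List.cons.injEq]
    constructor
    · rintro ⟨hlo, hpn, hpc, hrest⟩
      rcases hlo.eq_or_lt with rfl | hlt
      · exact Or.inl ⟨rest, hrest, rfl, rfl⟩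
      · exact Or.inr ⟨hlt, hpn, hpc, hrest⟩
    · rintro (⟨b, hb, rfl, rfl⟩ | ⟨hlt, hpn, hpc, hrest⟩)
      · exact ⟨le_rfl, hn, hc, hb⟩
      · exact ⟨Nat.le_of_succ_le hlt, hpn, hpc, hrest⟩

lemma ncard_sortedCapped_succ {m lo c : ℕ} (hc : lo ≤ c + 1) (hn : lo ≤ n) :
    (sortedCapped n (m + 1) lo c).ncard =
      (sortedCapped n m lo (c + 1)).ncard + (sortedCapped n (m + 1) (lo + 1) c).ncard := by
  have hdisj : Disjoint (List.cons lo '' sortedCapped n m lo (c + 1))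
      (sortedCapped n (m + 1) (lo + 1) c) := by
    refine Set.disjoint_left.2 ?_
    rintro _ ⟨b, -, rfl⟩ hb
    have := (cons_mem_sortedCapped.1 hb).1
    omega
  rw [sortedCapped_succ hc hn, Set.ncard_union_eq hdisj ((finite_sortedCapped _ _ _).image _)
    (finite_sortedCapped _ _ _), Set.ncard_image_of_injective _ List.cons_injective]

/-- Reflection principle: `t + 1` admissible values, and the first cap exceeds `lo` by `e - 1`. -/
theorem ncard_sortedCapped_add_choose (m : ℕ) : ∀ {t lo c e : ℕ}, lo + t = n → lo + e = c + 2 →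
    t < m + e → (sortedCapped n m lo c).ncard + (m + t).choose (m + e) = (m + t).choose m := by
  induction m with
  | zero =>
    intro t lo c e _ _ hte
    rw [sortedCapped_zero, Set.ncard_singleton, Nat.choose_eq_zero_of_lt (by omega),
      Nat.choose_zero_right]
  | succ m ihm =>
    intro t
    induction t with
    | zero =>
      intro lo c e hlo he hte
      obtain _ | e := e
      · simp [sortedCapped_succ_eq_empty (Or.inl (by omega : c + 1 < lo))]
      have hX := ihm (t := 0) (c := c + 1) (e := e + 2) hlo (by omega) (by omega)
      rw [ncard_sortedCapped_succ (by omega) (by omega),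
        sortedCapped_succ_eq_empty (Or.inr (by omega : n < lo + 1)), Set.ncard_empty]
      simpa [Nat.choose_eq_zero_of_lt] using hX
    | succ t iht =>
      intro lo c e hlo he hte
      obtain _ | e := e
      · simp [sortedCapped_succ_eq_empty (Or.inl (by omega : c + 1 < lo))]
      have hX := ihm (t := t + 1) (c := c + 1) (e := e + 2) hlo (by omega) (by omega)
      have hY := iht (lo := lo + 1) (c := c) (e := e) (by omega) (by omega) (by omega)
      rw [show m + (t + 1) = m + t + 1 by ring, show m + (e + 2) = m + e + 1 + 1 by ring] at hX
      rw [show m + 1 + t = m + t + 1 by ring, show m + 1 + e = m + e + 1 by ring] at hY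
      rw [ncard_sortedCapped_succ (by omega) (by omega), show m + 1 + (t + 1) = m + t + 1 + 1 by ring,
        show m + 1 + (e + 1) = m + e + 1 + 1 by ring, Nat.choose_succ_succ' (m + t + 1) (m + e + 1),
        Nat.choose_succ_succ' (m + t + 1) m]
      omega

end SortedCapped

lemma opLe_add_choose {n : ℕ} (hn : 1 ≤ n) (k : ℕ) :
    opLe n k + (2 * n - 1).choose (n + k + 1) = (2 * n - 1).choose n := by
  rw [opLe, setOf_flaws_le_eq_sortedCapped, show 2 * n - 1 = n + (n - 1) by omega]
  exact ncard_sortedCapped_add_choose n (lo := 1) (e := k + 1) (by omega) (by omega) (by omega)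

lemma opLe_succ (n k : ℕ) : opLe n (k + 1) = opLe n k + opEq n (k + 1) := by
  have hsplit : {a | IsOrderedPrefSet n a ∧ flaws n a ≤ k + 1} =
      {a | IsOrderedPrefSet n a ∧ flaws n a ≤ k} ∪
        {a | IsOrderedPrefSet n a ∧ flaws n a = k + 1} := by
    ext a
    simp only [Set.mem_union, Set.mem_ofPred_eq, Nat.le_add_one_iff, and_or_left]
  have hfin : {a | IsOrderedPrefSet n a ∧ flaws n a ≤ k + 1}.Finite := by
    rw [setOf_flaws_le_eq_sortedCapped]
    exact finite_sortedCapped _ _ _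
  have hdisj : Disjoint {a | IsOrderedPrefSet n a ∧ flaws n a ≤ k}
      {a | IsOrderedPrefSet n a ∧ flaws n a = k + 1} :=
    Set.disjoint_left.2 fun a ha hb => by have := ha.2; have := hb.2; omega
  rw [hsplit] at hfin
  rw [opLe, hsplit, Set.ncard_union_eq hdisj (hfin.subset Set.subset_union_left)
    (hfin.subset Set.subset_union_right), opLe, opEq]

lemma opEq_add_choose {n : ℕ} (hn : 1 ≤ n) (k : ℕ) :
    opEq n k + (2 * n - 1).choose (n + k + 1) = (2 * n - 1).choose (n + k) := by
  obtain _ | k := k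
  · simpa [opEq, opLe] using opLe_add_choose hn 0
  · have h1 := opLe_add_choose hn (k + 1)
    have h0 := opLe_add_choose hn k
    rw [opLe_succ] at h1
    simp only [← Nat.add_assoc] at h1 ⊢
    omega

lemma ballot_choose_identity {n k : ℕ} (hk : k < n) :
    n * (2 * n - 1).choose (n + k) =
      n * (2 * n - 1).choose (n + k + 1) + (k + 1) * (2 * n).choose (n - k - 1) := by
  obtain ⟨r, rfl⟩ : ∃ r, n = k + r + 1 := ⟨n - k - 1, by omega⟩
  rw [show 2 * (k + r + 1) - 1 = 2 * k + 2 * r + 1 by omega, show k + r + 1 - k - 1 = r by omega,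
    show k + r + 1 + k = 2 * k + r + 1 by ring,
    Nat.choose_symm_of_eq_add (show 2 * (k + r + 1) = r + (2 * k + r + 1 + 1) by ring),
    show 2 * (k + r + 1) = 2 * k + 2 * r + 1 + 1 by ring,
    Nat.choose_succ_succ' (2 * k + 2 * r + 1) (2 * k + r + 1)]
  have hratio := Nat.choose_succ_right_eq (2 * k + 2 * r + 1) (2 * k + r + 1)
  rw [show 2 * k + 2 * r + 1 - (2 * k + r + 1) = r by omega] at hratio
  linarith

theorem stmt3 (n k : ℕ) (hn : 1 ≤ n) (hk : k ≤ n - 1) :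
    n * opEq n k = (k + 1) * Nat.choose (2 * n) (n - k - 1) := by
  have hcount := congrArg (n * ·) (opEq_add_choose hn k)
  have hballot := ballot_choose_identity (show k < n by omega)
  simp only [mul_add] at hcount
  omega
end

section
/- For integers n ≥ 1 and 0 ≤ k ≤ n−1, the number op_{n,≤k} of ordered preference sets of length n with at most k flaws equals C(2n−1, n−1) − C(2n−1, n−k−2). -/
/-!
For a nondecreasing preference list the occupied spaces always form an interval, so the parking
process is a single pointer moving right; the cars that would be pushed past space `n` are the
flaws. Hence an ordered preference set `a₁ ≤ ⋯ ≤ aₙ` has at most `k` flaws iff `aᵢ ≤ i + k` for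
all `i`. Counting nondecreasing sequences of length `s` with entries in `[1, B]` and `aᵢ ≤ i + k`
by their last entry gives Pascal's recursion, whose solution is the reflection-principle count
`C(s + B - 1, s) - C(s + B - 1, s + k + 1)`; take `s = B = n`.
-/

-- Sorted cars parking on an unbounded street on which every space below `m` is taken:
-- `parkEnd a m` is one past the space of the last car.
def parkEnd : List ℕ → ℕ → ℕ
  | [], m => m
  | p :: rest, m => parkEnd rest (max m p + 1)

lemma parkEnd_of_forall_le {a : List ℕ} {m : ℕ} (h : ∀ x ∈ a, x ≤ m) :
    parkEnd a m = m + a.length := by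
  induction a generalizing m with
  | nil => rfl
  | cons p rest ih =>
    simp only [List.forall_mem_cons] at h
    rw [parkEnd, max_eq_left h.1, ih fun x hx => (h.2 x hx).trans m.le_succ]
    simp only [List.length_cons]
    omega

lemma parkEnd_le_iff {a : List ℕ} {m X : ℕ} :
    parkEnd a m ≤ X ↔ m + a.length ≤ X ∧ ∀ i (h : i < a.length), a[i] + (a.length - i) ≤ X := by
  induction a generalizing m with
  | nil => simp [parkEnd]
  | cons p rest ih =>
    simp only [parkEnd, ih, List.length_cons, Nat.forall_lt_succ_left', List.getElem_cons_zero,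
      List.getElem_cons_succ, Nat.add_sub_add_right, Nat.sub_zero, ← and_assoc]
    exact and_congr_left' (by omega)

lemma firstFree_eq_some {n p t : ℕ} {occ : Finset ℕ} (hpt : p ≤ t) (htn : t ≤ n) (ht : t ∉ occ)
    (hocc : ∀ j, p ≤ j → j < t → j ∈ occ) : firstFree n occ p = some t := by
  simp only [firstFree, List.find?_range'_eq_some, List.mem_range'_1]
  refine ⟨by simpa using ht, by omega, fun j hpj hjt => by simpa using hocc j hpj hjt⟩

lemma firstFree_eq_none {n p : ℕ} {occ : Finset ℕ} (hocc : ∀ j, p ≤ j → j ≤ n → j ∈ occ) :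
    firstFree n occ p = none := by
  simp only [firstFree, List.find?_eq_none, List.mem_range'_1]
  intro j hj
  simpa using hocc j hj.1 (by omega)

-- Invariant: among the spaces `≥ q` exactly those below `m` are taken. Cars then park in the
-- unbounded process exactly as in the real one, except that those sent beyond `n` are the flaws.
lemma flawsFrom_add_eq_max_parkEnd {n : ℕ} {a : List ℕ} (hsort : a.Pairwise (· ≤ ·))
    (hn : ∀ x ∈ a, x ≤ n) {occ : Finset ℕ} {q m : ℕ} (hqm : q ≤ m) (hmn : m ≤ n + 1)
    (hq : ∀ x ∈ a, q ≤ x) (hocc : ∀ j, q ≤ j → (j ∈ occ ↔ j < m)) :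
    flawsFrom n a occ + (n + 1) = max (n + 1) (parkEnd a m) := by
  induction a generalizing occ q m with
  | nil => simp [flawsFrom, parkEnd, hmn]
  | cons p rest ih =>
    simp only [List.pairwise_cons, List.forall_mem_cons] at hsort hn hq
    have hocc' : ∀ j, p ≤ j → (j ∈ occ ↔ j < m) := fun j hj => hocc j (hq.1.trans hj)
    by_cases hfree : max m p ≤ n
    · have hff : firstFree n occ p = some (max m p) :=
        firstFree_eq_some (le_max_right m p) hfree (by simp [hocc' _ (le_max_right m p)])
          fun j hpj hj => (hocc' j hpj).2 (by omega)
      rw [flawsFrom, hff, parkEnd]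
      refine ih hsort.2 hn.2 ((le_max_right m p).trans (Nat.le_succ _)) (by omega) hsort.1
        fun j hj => ?_
      simp only [Finset.mem_insert, hocc' j hj]
      omega
    · have hff : firstFree n occ p = none :=
        firstFree_eq_none fun j hpj hjn => (hocc' j hpj).2 (by omega)
      rw [flawsFrom, hff, parkEnd, add_right_comm,
        ih hsort.2 hn.2 (by omega) (by omega) hsort.1 hocc',
        parkEnd_of_forall_le fun x hx => by have := hn.2 x hx; omega,
        parkEnd_of_forall_le fun x hx => by have := hn.2 x hx; omega]
      omega

lemma flaws_le_iff {n k : ℕ} {a : List ℕ} (h : IsOrderedPrefSet n a) :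
    flaws n a ≤ k ↔ ∀ i (hi : i < a.length), a[i] ≤ i + 1 + k := by
  obtain ⟨⟨hlen, hmem⟩, hsort⟩ := h
  have hend := flawsFrom_add_eq_max_parkEnd hsort (fun x hx => (hmem x hx).2) (occ := ∅)
    le_rfl (by omega) (fun x hx => (hmem x hx).1) (by simp; omega)
  rw [flaws, ← Nat.add_le_add_iff_right (n := n + 1), hend, max_le_iff, parkEnd_le_iff]
  simp only [hlen]
  constructor
  · rintro ⟨-, -, h⟩ i hi
    have := h i (by omega)
    omega
  · intro h
    exact ⟨by omega, by omega, fun i hi => by have := h i (by omega); omega⟩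

-- Indices are `0`-based, so `a[i] ≤ i + 1 + k` is the bound `aᵢ ≤ i + k`.
def ballotSeqs (k s B : ℕ) : Set (List ℕ) :=
  {a | a.length = s ∧ a.Pairwise (· ≤ ·) ∧ (∀ x ∈ a, 1 ≤ x ∧ x ≤ B) ∧
    ∀ i (h : i < a.length), a[i] ≤ i + 1 + k}

section ballotSeqs

variable {k s B : ℕ}

lemma ballotSeqs_finite : (ballotSeqs k s B).Finite := by
  refine ((List.finite_length_eq (Fin (B + 1)) s).image (List.map Fin.val)).subset ?_
  rintro a ⟨hlen, -, hB, -⟩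
  refine ⟨a.map (Fin.ofNat (B + 1)), by simp [hlen], ?_⟩
  rw [List.map_map]
  exact (List.map_congr_left fun x hx => by
    simp [Nat.mod_eq_of_lt (Nat.lt_succ_of_le (hB x hx).2)]).trans (List.map_id a)

lemma ballotSeqs_zero_left : ballotSeqs k 0 B = {[]} := by
  ext a
  simp +contextual [ballotSeqs]

lemma ballotSeqs_succ_zero : ballotSeqs k (s + 1) 0 = ∅ := by
  refine Set.eq_empty_of_forall_notMem fun a ⟨hlen, _, hB, _⟩ => ?_
  have := hB (a[0]'(by omega)) (List.getElem_mem _)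
  omega

lemma append_singleton_mem_ballotSeqs {b : List ℕ} {x : ℕ} :
    b ++ [x] ∈ ballotSeqs k (s + 1) B ↔
      b ∈ ballotSeqs k s B ∧ (∀ y ∈ b, y ≤ x) ∧ 1 ≤ x ∧ x ≤ B ∧ x ≤ s + 1 + k := by
  simp +contextual only [ballotSeqs, Set.mem_ofPred_eq, List.length_append, List.length_singleton,
    Nat.add_right_cancel_iff, List.pairwise_append, List.pairwise_singleton, List.mem_singleton,
    forall_eq, true_and, List.forall_mem_append, Nat.forall_lt_succ_right',
    List.getElem_concat_length, List.getElem_append_left]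
  rcases eq_or_ne b.length s with rfl | hne
  · tauto
  · simp [hne]

lemma ballotSeqs_mono {B' : ℕ} (h : B ≤ B') : ballotSeqs k s B ⊆ ballotSeqs k s B' :=
  fun _ ⟨hlen, hsort, hB, hidx⟩ =>
    ⟨hlen, hsort, fun x hx => ⟨(hB x hx).1, (hB x hx).2.trans h⟩, hidx⟩

lemma mem_ballotSeqs_of_forall_le {a : List ℕ} {B' : ℕ} (ha : a ∈ ballotSeqs k s B')
    (h : ∀ x ∈ a, x ≤ B) : a ∈ ballotSeqs k s B :=
  ⟨ha.1, ha.2.1, fun x hx => ⟨(ha.2.2.1 x hx).1, h x hx⟩, ha.2.2.2⟩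

lemma ballotSeqs_succ_of_le (h : s + k ≤ B) : ballotSeqs k s (B + 1) = ballotSeqs k s B := by
  refine (Set.Subset.antisymm (fun a ha => mem_ballotSeqs_of_forall_le ha fun x hx => ?_)
    (ballotSeqs_mono B.le_succ))
  obtain ⟨i, hi, rfl⟩ := List.mem_iff_getElem.1 hx
  have := ha.2.2.2 i hi
  have := ha.1
  omega

lemma ballotSeqs_succ_succ (h : B ≤ s + k) :
    ballotSeqs k (s + 1) (B + 1) =
      ballotSeqs k (s + 1) B ∪ (· ++ [B + 1]) '' ballotSeqs k s (B + 1) := by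
  ext a
  constructor
  · intro ha
    obtain ⟨b, x, rfl⟩ := (List.eq_nil_or_concat' a).resolve_left fun h => by
      simpa [h] using ha.1
    obtain ⟨hb, hbx, hx1, hxB, -⟩ := append_singleton_mem_ballotSeqs.1 ha
    by_cases hx : x ≤ B
    · refine Or.inl (mem_ballotSeqs_of_forall_le ha ?_)
      simpa [or_imp, forall_and, hx] using fun y hy => (hbx y hy).trans hx
    · exact Or.inr ⟨b, hb, by rw [show x = B + 1 by omega]⟩
  · rintro (ha | ⟨b, hb, rfl⟩)
    · exact ballotSeqs_mono B.le_succ ha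
    · exact append_singleton_mem_ballotSeqs.2
        ⟨hb, fun y hy => (hb.2.2.1 y hy).2, B.succ_pos, le_rfl, by omega⟩

lemma ncard_ballotSeqs_succ_succ (h : B ≤ s + k) :
    (ballotSeqs k (s + 1) (B + 1)).ncard =
      (ballotSeqs k (s + 1) B).ncard + (ballotSeqs k s (B + 1)).ncard := by
  have hdisj : Disjoint (ballotSeqs k (s + 1) B) ((· ++ [B + 1]) '' ballotSeqs k s (B + 1)) := by
    refine Set.disjoint_left.2 fun a ha ⟨b, _, hab⟩ => ?_
    have := (ha.2.2.1 (B + 1) (by simp [← hab])).2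
    omega
  rw [ballotSeqs_succ_succ h, Set.ncard_union_eq hdisj ballotSeqs_finite
    (ballotSeqs_finite.image _),
    Set.ncard_image_of_injective _ (List.append_left_injective [B + 1])]

-- Stated additively to avoid truncated subtraction; at `s = B = 0` the index `s + B - 1`
-- truncates to `0`, where the identity still holds.
lemma ncard_ballotSeqs_add_choose (s : ℕ) : ∀ B, B ≤ s + k + 1 →
    (ballotSeqs k s B).ncard + (s + B - 1).choose (s + k + 1) = (s + B - 1).choose s := by
  induction s with
  | zero =>
    intro B hB
    rw [ballotSeqs_zero_left, Set.ncard_singleton, Nat.choose_eq_zero_of_lt (by omega),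
      Nat.choose_zero_right]
  | succ s ih =>
    intro B hB
    induction B with
    | zero =>
      rw [ballotSeqs_succ_zero, Set.ncard_empty, Nat.choose_eq_zero_of_lt (by omega),
        Nat.choose_eq_zero_of_lt (by omega)]
    | succ B ihB =>
      have hprev := ihB (by omega)
      clear ihB
      rw [show s + 1 + k + 1 = s + k + 1 + 1 by omega] at hprev ⊢
      rw [show s + 1 + B - 1 = s + B by omega] at hprev
      rw [show s + 1 + (B + 1) - 1 = s + B + 1 by omega,
        Nat.choose_succ_succ', Nat.choose_succ_succ']
      rcases Nat.lt_or_ge (s + k) B with hlt | hle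
      · -- The new bound `B + 1` excludes nothing, and symmetry supplies the missing Pascal term.
        obtain rfl : B = s + k + 1 := by omega
        have hsymm : (s + (s + k + 1)).choose s = (s + (s + k + 1)).choose (s + k + 1) :=
          Nat.choose_symm_of_eq_add rfl
        rw [ballotSeqs_succ_of_le (by omega)]
        omega
      · have hdel := ih (B + 1) (by omega)
        rw [show s + (B + 1) - 1 = s + B by omega] at hdel
        rw [ncard_ballotSeqs_succ_succ hle]
        omega

end ballotSeqs

theorem stmt4_general (n k : ℕ) :
    opLe n k = Nat.choose (2 * n - 1) (n - 1) - chooseInt (2 * n - 1) ((n : ℤ) - k - 2) := by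
  have hset : {a : List ℕ | IsOrderedPrefSet n a ∧ flaws n a ≤ k} = ballotSeqs k n n := by
    ext a
    constructor
    · rintro ⟨ha, hflaws⟩
      exact ⟨ha.1.1, ha.2, ha.1.2, (flaws_le_iff ha).1 hflaws⟩
    · rintro ⟨hlen, hsort, hmem, hidx⟩
      exact ⟨⟨⟨hlen, hmem⟩, hsort⟩, (flaws_le_iff ⟨⟨hlen, hmem⟩, hsort⟩).2 hidx⟩
  have hcount := ncard_ballotSeqs_add_choose (k := k) n n (by omega)
  rw [show n + n - 1 = 2 * n - 1 by omega] at hcount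
  have hall : (2 * n - 1).choose n = (2 * n - 1).choose (n - 1) :=
    Nat.choose_symm_of_eq_add (by omega)
  have hbad : (2 * n - 1).choose (n + k + 1) = chooseInt (2 * n - 1) ((n : ℤ) - k - 2) := by
    unfold chooseInt
    split_ifs with h
    · exact Nat.choose_symm_of_eq_add (by omega)
    · exact Nat.choose_eq_zero_of_lt (by omega)
  rw [opLe, hset, ← hall, ← hbad]
  omega

theorem stmt4 (n k : ℕ) (hn : 1 ≤ n) (hk : k ≤ n - 1) :
    opLe n k = Nat.choose (2 * n - 1) (n - 1) - chooseInt (2 * n - 1) ((n : ℤ) - k - 2) :=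
  stmt4_general n k
end

section
/- For integers k ≥ 0 and n ≥ l ≥ k+1, the number op_{n,≥k,≤l}^{k+1} of ordered preference sets (a_1,…,a_n) of length n with at least k flaws, leading term a_1 = k+1, and a_i ≤ l for all i, equals C(n+l−k−2, l−k−1). -/
/-!
Every entry of such a preference set is at least its leading term `k + 1`, so the cars can only
park in the `n - k` spaces `k + 1, …, n` and at least `k` of them fail: the flaw condition is
automatic. What remains are the nondecreasing sequences `k + 1 ≤ a₂ ≤ ⋯ ≤ aₙ ≤ l`, that is,
multisets of size `n - 1` drawn from the `l - k` values `k + 1, …, l`.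
-/

lemma firstFree_spec {n p j : ℕ} {occ : Finset ℕ} (h : firstFree n occ p = some j) :
    p ≤ j ∧ j ≤ n ∧ j ∉ occ := by
  unfold firstFree at h
  have hfree := List.find?_some h
  have hrange := List.mem_of_find?_eq_some h
  rw [List.mem_range'_1] at hrange
  simp only [decide_eq_true_eq] at hfree
  exact ⟨hrange.1, by omega, hfree⟩

lemma length_add_card_le_flawsFrom {n m : ℕ} :
    ∀ {L : List ℕ} {occ : Finset ℕ}, (∀ x ∈ L, m ≤ x) → occ ⊆ Finset.Icc m n →
      L.length + occ.card ≤ flawsFrom n L occ + (n + 1 - m)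
  | [], occ, _, hocc => by
    have := Finset.card_le_card hocc
    rw [Nat.card_Icc] at this
    simpa [flawsFrom]
  | p :: rest, occ, hL, hocc => by
    have hrest : ∀ x ∈ rest, m ≤ x := fun x hx => hL x (List.mem_cons_of_mem p hx)
    rw [flawsFrom, List.length_cons]
    cases hfree : firstFree n occ p with
    | none =>
      have := length_add_card_le_flawsFrom hrest hocc
      dsimp only
      omega
    | some j =>
      obtain ⟨hpj, hjn, hjocc⟩ := firstFree_spec hfree
      have hmj : m ≤ j := (hL p List.mem_cons_self).trans hpj
      have hocc' : insert j occ ⊆ Finset.Icc m n :=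
        Finset.insert_subset (Finset.mem_Icc.mpr ⟨hmj, hjn⟩) hocc
      have := length_add_card_le_flawsFrom hrest hocc'
      rw [Finset.card_insert_of_notMem hjocc] at this
      dsimp only
      omega

lemma length_sub_le_flaws {n k : ℕ} {a : List ℕ} (ha : ∀ x ∈ a, k < x) :
    a.length - (n - k) ≤ flaws n a := by
  have := length_add_card_le_flawsFrom (n := n) ha (Finset.empty_subset _)
  rw [flaws]
  simp only [Finset.card_empty, add_zero] at this
  omega

lemma ncard_setOf_pairwise_le_length_eq {α : Type*} [LinearOrder α] (s : Finset α) (r : ℕ) :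
    {L : List α | L.length = r ∧ L.Pairwise (· ≤ ·) ∧ ∀ x ∈ L, x ∈ s}.ncard =
      (s.card + r - 1).choose r := by
  let sortedList : Sym s r → List α := fun m => (m.1.map Subtype.val).sort (· ≤ ·)
  have hinj : sortedList.Injective := by
    intro m m' h
    have := congrArg (fun L : List α => (L : Multiset α)) h
    simp only [sortedList, Multiset.sort_eq] at this
    exact Sym.coe_injective (Multiset.map_injective Subtype.val_injective this)
  have hrange : {L : List α | L.length = r ∧ L.Pairwise (· ≤ ·) ∧ ∀ x ∈ L, x ∈ s} =
      sortedList '' Set.univ := by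
    ext L
    simp only [Set.mem_ofPred_eq, Set.image_univ, Set.mem_range]
    constructor
    · rintro ⟨hlen, hsorted, hmem⟩
      refine ⟨⟨(L.pmap Subtype.mk hmem : Multiset s), by simp [hlen]⟩, ?_⟩
      simp only [sortedList, Multiset.map_coe, List.map_pmap, List.pmap_eq_map, List.map_id',
        Multiset.coe_sort]
      exact List.mergeSort_eq_self _ (by simpa using hsorted)
    · rintro ⟨m, rfl⟩
      refine ⟨by simp [sortedList], Multiset.pairwise_sort _ _, fun x hx => ?_⟩
      simp only [sortedList, Multiset.mem_sort, Multiset.mem_map] at hx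
      obtain ⟨y, -, rfl⟩ := hx
      exact y.2
  rw [hrange, Set.ncard_image_of_injective _ hinj, Set.ncard_univ, Nat.card_eq_fintype_card,
    Sym.card_sym_eq_choose, Fintype.card_coe]

lemma setOf_opGeLeLead_eq_image_cons {n k l : ℕ} (hl : k + 1 ≤ l) (hn : l ≤ n) :
    {a : List ℕ | IsOrderedPrefSet n a ∧ k ≤ flaws n a ∧ (∀ x ∈ a, x ≤ l) ∧
      a.head? = some (k + 1)} = List.cons (k + 1) ''
      {t | t.length = n - 1 ∧ t.Pairwise (· ≤ ·) ∧ ∀ x ∈ t, x ∈ Finset.Icc (k + 1) l} := by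
  ext a
  simp only [Set.mem_ofPred_eq, Set.mem_image, IsOrderedPrefSet, IsPrefSet]
  constructor
  · rintro ⟨⟨⟨hlen, -⟩, hsorted⟩, -, hle, hhead⟩
    obtain ⟨t, rfl⟩ := List.head?_eq_some_iff.mp hhead
    obtain ⟨hge, htsorted⟩ := List.pairwise_cons.mp hsorted
    refine ⟨t, ⟨?_, htsorted, fun x hx => Finset.mem_Icc.mpr ⟨hge x hx, hle x ?_⟩⟩, rfl⟩
    · simp only [List.length_cons] at hlen
      omega
    · exact List.mem_cons_of_mem _ hx
  · rintro ⟨t, ⟨hlen, htsorted, ht⟩, rfl⟩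
    have hbounds : ∀ x ∈ (k + 1) :: t, k + 1 ≤ x ∧ x ≤ l := by
      simp only [List.mem_cons, forall_eq_or_imp]
      exact ⟨⟨le_rfl, hl⟩, fun x hx => Finset.mem_Icc.mp (ht x hx)⟩
    have hlen' : ((k + 1) :: t).length = n := by
      simp only [List.length_cons]
      omega
    have hflaws := length_sub_le_flaws (n := n) fun x hx => (hbounds x hx).1
    refine ⟨⟨⟨hlen', fun x hx => ?_⟩, ?_⟩, by omega, fun x hx => (hbounds x hx).2, rfl⟩
    · have := hbounds x hx
      omega
    · exact List.pairwise_cons.mpr ⟨fun x hx => (Finset.mem_Icc.mp (ht x hx)).1, htsorted⟩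

theorem stmt6 (n k l : ℕ) (hl : k + 1 ≤ l) (hn : l ≤ n) :
    opGeLeLead n k l (k + 1) = Nat.choose (n + l - k - 2) (l - k - 1) := by
  rw [opGeLeLead, setOf_opGeLeLead_eq_image_cons hl hn,
    Set.ncard_image_of_injective _ List.cons_injective, ncard_setOf_pairwise_le_length_eq,
    Nat.card_Icc, show l + 1 - (k + 1) + (n - 1) - 1 = n + l - k - 2 by omega]
  exact Nat.choose_symm_of_eq_add (by omega)
end

section
/- For integers k ≥ 0 and n ≥ l ≥ k+1, the number op_{n,k,≤l}^{k+1} of ordered preference sets (a_1,…,a_n) of length n with exactly k flaws, leading term a_1 = k+1, and a_i ≤ l for all i, satisfies (n+1) · op_{n,k,≤l}^{k+1} = (n−l+k+2) · C(n+l−k−1, l−k−1). -/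
/-!
Every preference is at least `k + 1`, so spaces `1, …, k` stay empty and a nondecreasing list
has exactly `k` flaws iff its `i`-th entry (from `0`) is at most `k + 1 + i`: when cars arrive in
nondecreasing order of preference, each one parks at the larger of its preference and the space
after the last one taken, so a flaw beyond the forced `k` occurs exactly when some car jumps over a
free space. The sets counted are thus the nondecreasing lists of length `n` starting at `k + 1`
under the staircase `min (k + 1 + i) l`, a ballot problem: by Pascal's rule their number is
`C(N, n) - C(N, n + 1)` with `N = n + l - k - 1`, and `(n + 1) C(N, n + 1) = (l - k - 1) C(N, n)`.
-/

open Finset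

/-- Invariant of parking a nondecreasing preference list `as`: the next car parks at its own
preference or right after `c`, whichever is larger. -/
def FilledUpTo (c : ℕ) (occ : Finset ℕ) (as : List ℕ) : Prop :=
  occ ⊆ Iic c ∧ ∀ p ∈ as, Icc p c ⊆ occ

theorem firstFree_eq {n c p : ℕ} {occ : Finset ℕ} (hocc : occ ⊆ Iic c) (hp : Icc p c ⊆ occ)
    (hpn : p ≤ n) : firstFree n occ p = if c < n then some (max p (c + 1)) else none := by
  have mem_occ : ∀ j, p ≤ j → j ≤ c → j ∈ occ := fun j h₁ h₂ =>
    hp (mem_Icc.2 ⟨h₁, h₂⟩)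
  unfold firstFree
  split_ifs with hc
  · rw [List.find?_range'_eq_some]
    refine ⟨?_, by simp; omega, fun j hpj hj => by simp [mem_occ j hpj (by omega)]⟩
    simpa using fun h => (show max p (c + 1) ≤ c from mem_Iic.1 (hocc h)).not_gt (by omega)
  · rw [List.find?_range'_eq_none]
    exact fun j hpj hj => by simp [mem_occ j hpj (by omega)]

namespace FilledUpTo

variable {c : ℕ} {occ : Finset ℕ} {p : ℕ} {as : List ℕ}

theorem empty_of_forall_lt (h : ∀ x ∈ as, c < x) : FilledUpTo c ∅ as :=
  ⟨empty_subset _, fun p hp => by simp [Icc_eq_empty_of_lt (h p hp)]⟩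

theorem tail (h : FilledUpTo c occ (p :: as)) : FilledUpTo c occ as :=
  ⟨h.1, fun q hq => h.2 q (List.mem_cons_of_mem _ hq)⟩

theorem park (h : FilledUpTo c occ (p :: as)) (hs : ∀ x ∈ as, p ≤ x) :
    FilledUpTo (max p (c + 1)) (insert (max p (c + 1)) occ) as := by
  refine ⟨insert_subset (by simp) (h.1.trans (Iic_subset_Iic.2 (by omega))),
    fun q hq x hx => ?_⟩
  rw [mem_Icc] at hx
  rcases Nat.lt_or_ge x (c + 1) with hxc | hxc
  · exact mem_insert_of_mem (h.2 q (List.mem_cons_of_mem _ hq) (mem_Icc.2 ⟨hx.1, by omega⟩))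
  · have := hs q hq
    exact mem_insert.2 (Or.inl (by omega))

end FilledUpTo

section SortedParking

variable {n c : ℕ} {occ : Finset ℕ} {p : ℕ} {as : List ℕ}

theorem flawsFrom_cons_of_lt (h : FilledUpTo c occ (p :: as)) (hpn : p ≤ n) (hc : c < n) :
    flawsFrom n (p :: as) occ = flawsFrom n as (insert (max p (c + 1)) occ) := by
  rw [flawsFrom, firstFree_eq h.1 (h.2 p List.mem_cons_self) hpn, if_pos hc]

theorem flawsFrom_of_full (h : FilledUpTo n occ as) (hub : ∀ x ∈ as, x ≤ n) :
    flawsFrom n as occ = as.length := by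
  induction as with
  | nil => rfl
  | cons p as ih =>
    rw [flawsFrom, firstFree_eq h.1 (h.2 p List.mem_cons_self) (hub p List.mem_cons_self),
      if_neg (lt_irrefl n)]
    simp only [ih h.tail fun x hx => hub x (List.mem_cons_of_mem _ hx), List.length_cons]

theorem flawsFrom_eq_of_getElem_le (hcn : c ≤ n) (hs : as.Pairwise (· ≤ ·))
    (hinv : FilledUpTo c occ as) (hub : ∀ x ∈ as, x ≤ n)
    (hbd : ∀ (i : ℕ) (h : i < as.length), as[i] ≤ c + 1 + i) :
    flawsFrom n as occ = c + as.length - n := by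
  induction as generalizing c occ with
  | nil => simp only [flawsFrom, List.length_nil]; omega
  | cons p as ih =>
    rw [List.pairwise_cons] at hs
    have hub' : ∀ x ∈ as, x ≤ n := fun x hx => hub x (List.mem_cons_of_mem _ hx)
    have hpc : p ≤ c + 1 := hbd 0 (by simp)
    rcases hcn.lt_or_eq with hc | rfl
    · rw [flawsFrom_cons_of_lt hinv (hub p List.mem_cons_self) hc, max_eq_right hpc,
        ih (by omega) hs.2 (max_eq_right hpc ▸ hinv.park hs.1) hub' fun i h => by
          have := hbd (i + 1) (by simpa using h)
          simp only [List.getElem_cons_succ] at this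
          omega, List.length_cons]
      omega
    · rw [flawsFrom_of_full hinv hub]
      simp

theorem add_length_le_flawsFrom_add (hcn : c ≤ n) (hs : as.Pairwise (· ≤ ·))
    (hinv : FilledUpTo c occ as) (hub : ∀ x ∈ as, x ≤ n) :
    c + as.length ≤ flawsFrom n as occ + n := by
  induction as generalizing c occ with
  | nil => simpa [flawsFrom]
  | cons p as ih =>
    rw [List.pairwise_cons] at hs
    have hub' : ∀ x ∈ as, x ≤ n := fun x hx => hub x (List.mem_cons_of_mem _ hx)
    rcases hcn.lt_or_eq with hc | rfl
    · rw [flawsFrom_cons_of_lt hinv (hub p List.mem_cons_self) hc]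
      have := ih (by have := hub p List.mem_cons_self; omega) hs.2 (hinv.park hs.1) hub'
      simp only [List.length_cons]; omega
    · rw [flawsFrom_of_full hinv hub]
      omega

theorem add_length_lt_flawsFrom_add (hcn : c ≤ n) (hs : as.Pairwise (· ≤ ·))
    (hinv : FilledUpTo c occ as) (hub : ∀ x ∈ as, x ≤ n)
    (hviol : ∃ (i : ℕ) (h : i < as.length), c + 1 + i < as[i]) :
    c + as.length < flawsFrom n as occ + n := by
  induction as generalizing c occ with
  | nil => simp at hviol
  | cons p as ih =>
    obtain ⟨i, hi, hpi⟩ := hviol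
    rw [List.pairwise_cons] at hs
    have hpn := hub p List.mem_cons_self
    have hub' : ∀ x ∈ as, x ≤ n := fun x hx => hub x (List.mem_cons_of_mem _ hx)
    rcases hcn.lt_or_eq with hc | rfl
    · rw [flawsFrom_cons_of_lt hinv hpn hc]
      simp only [List.length_cons]
      rcases Nat.lt_or_ge (c + 1) p with hjump | hpc
      · -- a car skipped a free space, which stays empty forever
        have := add_length_le_flawsFrom_add (by omega) hs.2 (hinv.park hs.1) hub'
        omega
      · obtain ⟨j, rfl⟩ : ∃ j, i = j + 1 :=
          Nat.exists_eq_succ_of_ne_zero (by rintro rfl; exact absurd hpi (by simpa using hpc))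
        have := ih (by omega) hs.2 (hinv.park hs.1) hub'
          ⟨j, by simpa using hi, by simp only [List.getElem_cons_succ] at hpi; omega⟩
        omega
    · have := hub _ (List.getElem_mem hi)
      omega

end SortedParking

theorem flaws_eq_iff_getElem_le {n k : ℕ} {a : List ℕ} (hk : k ≤ n) (hlen : a.length = n)
    (hs : a.Pairwise (· ≤ ·)) (hlo : ∀ x ∈ a, k < x) (hub : ∀ x ∈ a, x ≤ n) :
    flaws n a = k ↔ ∀ (i : ℕ) (h : i < a.length), a[i] ≤ k + 1 + i := by
  have hinv := FilledUpTo.empty_of_forall_lt hlo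
  refine ⟨fun hfl => ?_, fun hbd => ?_⟩
  · by_contra! hviol
    have := add_length_lt_flawsFrom_add hk hs hinv hub hviol
    rw [flaws] at hfl
    omega
  · rw [flaws, flawsFrom_eq_of_getElem_le hk hs hinv hub hbd]
    omega

def stairLists (L : ℕ) : ℕ → ℕ → ℕ → Finset (List ℕ)
  | 0, _, _ => {[]}
  | m + 1, lo, s => (Icc lo (min s L)).biUnion fun v => (stairLists L m v (s + 1)).image (v :: ·)

theorem forall_getElem_cons_le_add_iff {v s : ℕ} {t : List ℕ} :
    (∀ (i : ℕ) (h : i < (v :: t).length), (v :: t)[i] ≤ s + i) ↔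
      v ≤ s ∧ ∀ (i : ℕ) (h : i < t.length), t[i] ≤ s + 1 + i := by
  refine ⟨fun h => ⟨h 0 (by simp), fun i hi => ?_⟩, ?_⟩
  · have := h (i + 1) (by simpa using hi)
    simp only [List.getElem_cons_succ] at this
    omega
  · rintro ⟨h0, ht⟩ (_ | i) hi
    · exact h0
    · have := ht i (by simpa using hi)
      simp only [List.getElem_cons_succ]
      omega

theorem mem_stairLists {L m lo s : ℕ} {b : List ℕ} :
    b ∈ stairLists L m lo s ↔
      b.length = m ∧ b.Pairwise (· ≤ ·) ∧ (∀ x ∈ b, lo ≤ x ∧ x ≤ L) ∧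
      ∀ (i : ℕ) (h : i < b.length), b[i] ≤ s + i := by
  induction m generalizing lo s b with
  | zero => cases b <;> simp [stairLists]
  | succ m ih =>
    cases b with
    | nil => simp [stairLists]
    | cons v t =>
      rw [forall_getElem_cons_le_add_iff]
      simp only [stairLists, mem_biUnion, mem_image, mem_Icc, List.cons.injEq, ih,
        List.length_cons, List.pairwise_cons, List.mem_cons, forall_eq_or_imp, le_min_iff]
      constructor
      · rintro ⟨w, ⟨hlo, hs, hL⟩, t, ⟨hlen, hsort, hrange, hbd⟩, rfl, rfl⟩
        refine ⟨by omega, ⟨fun x hx => (hrange x hx).1, hsort⟩, ⟨⟨hlo, hL⟩,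
          fun x hx => ⟨hlo.trans (hrange x hx).1, (hrange x hx).2⟩⟩, by simpa using hs,
          fun i hi => by have := hbd i hi; omega⟩
      · rintro ⟨hlen, ⟨hvt, hsort⟩, ⟨⟨hlo, hL⟩, hrange⟩, hs, hbd⟩
        exact ⟨v, ⟨hlo, by simpa using hs, hL⟩, t,
          ⟨by omega, hsort, fun x hx => ⟨hvt x hx, (hrange x hx).2⟩,
            fun i hi => by have := hbd i hi; omega⟩, rfl, rfl⟩

theorem card_stairLists_succ (L m lo s : ℕ) :
    #(stairLists L (m + 1) lo s) = ∑ v ∈ Icc lo (min s L), #(stairLists L m v (s + 1)) := by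
  rw [stairLists, card_biUnion]
  · exact sum_congr rfl fun v _ => card_image_of_injective _ (List.cons_injective)
  · intro v _ w _ hvw
    simp only [Function.onFun, disjoint_left, mem_image]
    rintro _ ⟨t, _, rfl⟩ ⟨t', _, h⟩
    exact hvw (List.cons.inj h).1.symm

theorem card_stairLists_succ_of_lt {L m lo s : ℕ} (h : min s L < lo) :
    #(stairLists L (m + 1) lo s) = 0 := by
  rw [card_stairLists_succ, Icc_eq_empty_of_lt h, sum_empty]

theorem card_stairLists_succ_of_le {L m lo s : ℕ} (h : lo ≤ min s L) :
    #(stairLists L (m + 1) lo s)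
      = #(stairLists L m lo (s + 1)) + #(stairLists L (m + 1) (lo + 1) s) := by
  rw [card_stairLists_succ, card_stairLists_succ, Icc_eq_cons_Ioc h, sum_cons,
    ← Icc_add_one_left_eq_Ioc]

/-- Writing the reflected ballot term as `C(N, m + s + 1 - lo)` rather than `C(N, L - s - 1)` makes
it vanish by itself once `L ≤ s`; both sides then obey Pascal's rule in `(m, lo)`. -/
theorem card_stairLists_add_choose {L m lo s : ℕ} (h₁ : lo ≤ s + 1) (h₂ : lo ≤ L)
    (h₃ : L ≤ m + s) :
    #(stairLists L m lo s) + (m + (L - lo)).choose (m + s + 1 - lo)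
      = (m + (L - lo)).choose m := by
  induction m generalizing lo s with
  | zero =>
    simp [stairLists, Nat.choose_eq_zero_of_lt (show L - lo < s + 1 - lo by omega)]
  | succ m ih =>
    suffices ∀ d lo s, L - lo = d → lo ≤ s + 1 → lo ≤ L → L ≤ m + 1 + s →
        #(stairLists L (m + 1) lo s) + (m + 1 + d).choose (m + 1 + s + 1 - lo)
          = (m + 1 + d).choose (m + 1) from
      this _ lo s rfl h₁ h₂ h₃
    clear h₁ h₂ h₃
    intro d
    induction d with
    | zero =>
      intro lo s hd h₁ h₂ h₃
      obtain rfl : L = lo := by omega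
      rcases h₁.lt_or_eq with hs | rfl
      · have h₄ := ih (lo := L) (s := s + 1) (by omega) le_rfl (by omega)
        rw [card_stairLists_succ_of_le (by omega), card_stairLists_succ_of_lt (by omega)]
        rw [Nat.choose_eq_zero_of_lt (by omega)] at h₄ ⊢
        simpa using h₄
      · rw [card_stairLists_succ_of_lt (by omega)]
        simp
    | succ d ihd =>
      intro lo s hd h₁ h₂ h₃
      rcases h₁.lt_or_eq with hs | rfl
      · have h₄ := ih (s := s + 1) (by omega) h₂ (by omega)
        have h₅ := ihd (lo + 1) s (by omega) (by omega) (by omega) h₃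
        rw [show m + (L - lo) = m + 1 + d by omega,
          show m + (s + 1) + 1 - lo = m + s + 1 - lo + 1 by omega] at h₄
        rw [show m + 1 + s + 1 - (lo + 1) = m + s + 1 - lo by omega] at h₅
        rw [card_stairLists_succ_of_le (by omega), show m + 1 + (d + 1) = m + 1 + d + 1 by omega,
          show m + 1 + s + 1 - lo = m + s + 1 - lo + 1 by omega, Nat.choose_succ_succ',
          Nat.choose_succ_succ']
        omega
      · rw [card_stairLists_succ_of_lt (by omega)]
        simp

theorem le_of_mem_of_head?_eq {a : List ℕ} {m : ℕ} (hs : a.Pairwise (· ≤ ·))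
    (hhead : a.head? = some m) : ∀ x ∈ a, m ≤ x := by
  obtain ⟨t, rfl⟩ : ∃ t, a = m :: t := List.head?_eq_some_iff.1 hhead
  rintro x (_ | ⟨_, hx⟩)
  exacts [le_rfl, (List.pairwise_cons.1 hs).1 x hx]

theorem opEqLeLead_eq_card_stairLists {n k l : ℕ} (hl : k + 1 ≤ l) (hn : l ≤ n) :
    opEqLeLead n k l (k + 1) = #(stairLists l n (k + 1) (k + 1)) := by
  rw [opEqLeLead, ← Set.ncard_coe_finset]
  congr 1
  ext a
  rw [Set.mem_ofPred_eq, mem_coe, mem_stairLists, IsOrderedPrefSet, IsPrefSet]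
  constructor
  · rintro ⟨⟨⟨hlen, hrange⟩, hs⟩, hfl, hub, hhead⟩
    have hlo := le_of_mem_of_head?_eq hs hhead
    refine ⟨hlen, hs, fun x hx => ⟨hlo x hx, hub x hx⟩, ?_⟩
    exact (flaws_eq_iff_getElem_le (by omega) hlen hs hlo fun x hx => (hrange x hx).2).1 hfl
  · rintro ⟨hlen, hs, hrange, hbd⟩
    refine ⟨⟨⟨hlen, fun x hx => ?_⟩, hs⟩, ?_, fun x hx => (hrange x hx).2, ?_⟩
    · have := hrange x hx; omega
    · exact (flaws_eq_iff_getElem_le (by omega) hlen hs (fun x hx => (hrange x hx).1)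
        fun x hx => (hrange x hx).2.trans hn).2 hbd
    · obtain ⟨v, t, rfl⟩ := List.exists_cons_of_length_pos (show 0 < a.length by omega)
      have h₁ : v ≤ k + 1 + 0 := hbd 0 (by simp)
      have h₂ := (hrange v List.mem_cons_self).1
      rw [List.head?_cons, Option.some.injEq]
      omega

theorem stmt8 (n k l : ℕ) (hl : k + 1 ≤ l) (hn : l ≤ n) :
    (n + 1) * opEqLeLead n k l (k + 1)
      = (n - l + k + 2) * Nat.choose (n + l - k - 1) (l - k - 1) := by
  obtain ⟨D, rfl⟩ : ∃ D, l = k + 1 + D := ⟨l - (k + 1), by omega⟩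
  have hcount :=
    card_stairLists_add_choose (m := n) (lo := k + 1) (s := k + 1) (by omega) hl (by omega)
  rw [← opEqLeLead_eq_card_stairLists hl hn, show n + (k + 1) + 1 - (k + 1) = n + 1 by omega,
    show n + (k + 1 + D - (k + 1)) = n + D by omega] at hcount
  have hcross : (n + 1) * (n + D).choose (n + 1) = D * (n + D).choose n := by
    rw [Nat.mul_comm, Nat.choose_succ_right_eq, Nat.mul_comm, Nat.add_sub_cancel_left]
  rw [show n + (k + 1 + D) - k - 1 = n + D by omega, show k + 1 + D - k - 1 = D by omega,
    ← Nat.choose_symm_add, show n - (k + 1 + D) + k + 2 = n + 1 - D by omega, Nat.sub_mul,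
    ← hcross, ← hcount, Nat.mul_add, Nat.add_sub_cancel]
end
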